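/- Let p be a prime, q a power of p, K an algebraically closed field of characteristic p, and r ≥ 1. Let x = (x_1, …, x_r) ∈ K^r be nonzero, let S = {i ∈ {1, …, r} | x_i ≠ 0}, and let s = gcd(S). Then the set of tuples ε = (ε_1, …, ε_r) with ε_i ∈ μ_{q^i−1}(K) for each i, such that there exists c ∈ K^× with ε_i·x_i = c·x_i for all i = 1, …, r, has cardinality (∏_{i ∈ {1,…,r} \ S} (q^i − 1)) · (q^s − 1). -/

import Mathlib

/-!
A tuple `ε` acts on `x` by a scalar exactly when it is constant on the support `S` of `x`. So the
coordinates off `S` are free roots of unity, while the common value on `S` lies in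
`⋂_{i ∈ S} μ_{q^i - 1} = μ_{q^s - 1}`, because `gcd (q^m - 1) (q^n - 1) = q^(gcd m n) - 1`.
Since `q = 0` in `K`, each `q^m - 1` is prime to the characteristic, so `μ_{q^m - 1}(K)` has
exactly `q^m - 1` elements.
-/

theorem Finset.gcd_pow_sub_one {ι : Type*} (s : Finset ι) (f : ι → ℕ) (q : ℕ) :
    s.gcd (fun i => q ^ f i - 1) = q ^ s.gcd f - 1 := by
  classical
  induction s using Finset.induction_on with
  | empty => simp
  | insert a s _ ih => simp [Finset.gcd_insert, ih, gcd_eq_nat_gcd]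

theorem iInf_rootsOfUnity {ι M : Type*} [CommMonoid M] (s : Finset ι) (f : ι → ℕ) :
    ⨅ i ∈ s, rootsOfUnity (f i) M = rootsOfUnity (s.gcd f) M := by
  classical
  induction s using Finset.induction_on with
  | empty => ext; simp
  | insert a s _ ih =>
    rw [Finset.iInf_insert, ih, rootsOfUnity_inf_rootsOfUnity, Finset.gcd_insert, gcd_eq_nat_gcd]

theorem natCard_rootsOfUnity_pow_sub_one {F : Type*} [Field F] [IsSepClosed F] {q m : ℕ}
    (hq : 1 ≤ q) (hqF : (q : F) = 0) (hm : m ≠ 0) :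
    Nat.card (rootsOfUnity (q ^ m - 1) F) = q ^ m - 1 := by
  have : NeZero ((q ^ m - 1 : ℕ) : F) :=
    ⟨by simp [Nat.cast_sub (Nat.one_le_pow _ _ hq), hqF, zero_pow hm]⟩
  have := NeZero.of_neZero_natCast F (n := q ^ m - 1)
  exact HasEnoughRootsOfUnity.natCard_rootsOfUnity F _

def Subgroup.piConstOnEquiv {ι G : Type*} [Group G] (H : ι → Subgroup G) (S : Set ι)
    [DecidablePred (· ∈ S)] {i₀ : ι} (hi₀ : i₀ ∈ S) :
    {ε : ι → G // (∀ i, ε i ∈ H i) ∧ ∃ c, ∀ i ∈ S, ε i = c} ≃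
      (∀ i : {i // i ∉ S}, H i) × ↥(⨅ i ∈ S, H i) where
  toFun ε := (fun i => ⟨ε.1 i, ε.2.1 i⟩, ⟨ε.1 i₀, by
    obtain ⟨hmem, c, hc⟩ := ε.2
    simp only [Subgroup.mem_iInf]
    intro i hi
    rw [hc i₀ hi₀, ← hc i hi]
    exact hmem i⟩)
  invFun η := ⟨fun i => if h : i ∈ S then η.2 else η.1 ⟨i, h⟩, fun i => by
      dsimp only
      split_ifs with h
      · exact Subgroup.mem_iInf.1 (Subgroup.mem_iInf.1 η.2.2 i) h
      · exact (η.1 ⟨i, h⟩).2,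
    η.2, fun i hi => dif_pos hi⟩
  left_inv := by
    rintro ⟨ε, hmem, c, hc⟩
    ext i
    by_cases h : i ∈ S <;> simp [h, hc i₀ hi₀, hc i]
  right_inv := by
    rintro ⟨η, c⟩
    ext i
    · simp [i.2]
    · simp [hi₀]

theorem exists_units_mul_eq_iff {ι M : Type*} [MonoidWithZero M] [IsRightCancelMulZero M]
    (ε : ι → Mˣ) (x : ι → M) :
    (∃ c : Mˣ, ∀ i, (ε i : M) * x i = c * x i) ↔ ∃ c, ∀ i ∈ {i | x i ≠ 0}, ε i = c := by
  refine exists_congr fun c => forall_congr' fun i => ?_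
  by_cases h : x i = 0
  · simp [h]
  · simp [h, Units.val_inj]

open scoped Classical in
theorem stmt_3_general (p : ℕ) (hp : p.Prime) (q : ℕ) (hq : ∃ k : ℕ, 0 < k ∧ q = p ^ k)
    (K : Type*) [Field K] [IsAlgClosed K] [CharP K p]
    (r : ℕ) (x : Fin r → K) (hx : x ≠ 0) :
    Nat.card {ε : Fin r → Kˣ //
        (∀ i : Fin r, ε i ∈ rootsOfUnity (q ^ ((i : ℕ) + 1) - 1) K) ∧
        ∃ c : Kˣ, ∀ i : Fin r, (ε i : K) * x i = (c : K) * x i} =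
      (∏ i ∈ Finset.univ.filter (fun i : Fin r => x i = 0), (q ^ ((i : ℕ) + 1) - 1)) *
        (q ^ ((Finset.univ.filter (fun i : Fin r => x i ≠ 0)).gcd
            (fun i => (i : ℕ) + 1)) - 1) := by
  obtain ⟨k, hk, rfl⟩ := hq
  have hq : 1 ≤ p ^ k := Nat.one_le_pow _ _ hp.pos
  have hqK : ((p ^ k : ℕ) : K) = 0 := by simp [hk.ne']
  obtain ⟨i₀, hi₀⟩ := Function.ne_iff.mp hx
  set S := Finset.univ.filter (fun i : Fin r => x i ≠ 0)
  have hinf : ⨅ i ∈ {i | x i ≠ 0}, rootsOfUnity ((p ^ k) ^ ((i : ℕ) + 1) - 1) K =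
      rootsOfUnity ((p ^ k) ^ S.gcd (fun i => (i : ℕ) + 1) - 1) K := by
    simpa [S, Finset.gcd_pow_sub_one] using
      iInf_rootsOfUnity (M := K) S (fun i => (p ^ k) ^ ((i : ℕ) + 1) - 1)
  have hs : S.gcd (fun i => (i : ℕ) + 1) ≠ 0 := fun h => by
    simpa using Finset.gcd_eq_zero_iff.1 h i₀ (by simpa [S] using hi₀)
  rw [Nat.card_congr ((Equiv.subtypeEquivRight fun ε =>
      and_congr_right' (exists_units_mul_eq_iff ε x)).trans
      (Subgroup.piConstOnEquiv _ {i | x i ≠ 0} hi₀)),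
    Nat.card_prod, Nat.card_pi, hinf, natCard_rootsOfUnity_pow_sub_one hq hqK hs,
    Finset.prod_subtype _ (p := fun i => i ∉ {i | x i ≠ 0}) (by simp)]
  exact congrArg (· * _) (Fintype.prod_congr _ _ fun i =>
    natCard_rootsOfUnity_pow_sub_one hq hqK (Nat.succ_ne_zero _))

open scoped Classical in
/-- (1.6) of the paper: the stabilizer computation. For a nonzero `x ∈ K^r`, with
`S = {i | x_i ≠ 0}` and `s = gcd S` (indices running from 1 to r), the set of tuples
`ε` with `ε_i` a `(q^i - 1)`-th root of unity acting on `x` by a global scalar has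
cardinality `(∏_{i ∉ S} (q^i - 1)) · (q^s - 1)`. -/
theorem stmt_3 (p : ℕ) (hp : p.Prime) (q : ℕ) (hq : ∃ k : ℕ, 0 < k ∧ q = p ^ k)
    (K : Type*) [Field K] [IsAlgClosed K] [CharP K p]
    (r : ℕ) (hr : 1 ≤ r) (x : Fin r → K) (hx : x ≠ 0) :
    Nat.card {ε : Fin r → Kˣ //
        (∀ i : Fin r, ε i ∈ rootsOfUnity (q ^ ((i : ℕ) + 1) - 1) K) ∧
        ∃ c : Kˣ, ∀ i : Fin r, (ε i : K) * x i = (c : K) * x i} =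
      (∏ i ∈ Finset.univ.filter (fun i : Fin r => x i = 0), (q ^ ((i : ℕ) + 1) - 1)) *
        (q ^ ((Finset.univ.filter (fun i : Fin r => x i ≠ 0)).gcd
            (fun i => (i : ℕ) + 1)) - 1) :=
  stmt_3_general p hp q hq K r x hx
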